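/- Let f : ℝ^d → ℝ be written as f(x) = E_{z∼D_m}[f(x,z)] for each m, with f(·,z) almost surely L-smooth and μ-strongly convex (μ ≥ 0), and let x_* be a minimizer of f. Let x^1, ..., x^M ∈ ℝ^d, x̂ = (1/M) Σ_m x^m, V = (1/M) Σ_m ‖x^m - x̂‖², and let g = (1/M) Σ_m ∇f(x^m, z_m) with z_1, ..., z_M independent, z_m ∼ D_m. If 0 < γ ≤ 1/(4L(1 + 2/M)), then E‖x̂ - γg - x_*‖² ≤ (1 - γμ)‖x̂ - x_*‖² + 2γL·V + 2γ²σ_opt²/M - (γ/2)(f(x̂) - f(x_*)), where σ_opt² = (1/M) Σ_m E_{z_m∼D_m}‖∇f(x_*, z_m)‖². -/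

import Mathlib

/-!
Expand the square: `E‖x̂ - γ g - x*‖² = ‖x̂ - x*‖² - 2γ ⟪x̂ - x*, E g⟫ + γ² E‖g‖²`, where
`E g` is the average of the gradients `∇f(xᵐ)`. Averaging the strong-convexity inequality at `x*`
and the smoothness inequality at `x̂`, both taken at the points `xᵐ`, bounds the cross term from
below by `f(x̂) - f(x*) + μ/2 ‖x̂ - x*‖² - L/2 V`. For the second moment, write each stochastic
gradient as its deviation from the stochastic gradient at `x*` plus that gradient: co-coercivity
bounds the deviations by `2L (f(xᵐ) - f(x*))`, whose average is at most
`2L (f(x̂) - f(x*) + L/2 V)` by smoothness at `x̂`, while the gradients at `x*` are independent and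
centred, so their average has second moment `σ²/M`. The step-size condition `4γL ≤ 1` lets the
negative multiple of `f(x̂) - f(x*)` absorb the `γ²` terms.
-/

open MeasureTheory ProbabilityTheory Finset
open scoped InnerProductSpace

/-- `f : ℝ^d → ℝ` is `L`-smooth and `μ`-strongly convex (`μ = 0` meaning merely convex),
witnessed by the gradient map `df`:
`(μ/2)‖x - y‖² ≤ f x - f y - ⟪df y, x - y⟫ ≤ (L/2)‖x - y‖²` for all `x, y`. -/
def SmoothSC {d : ℕ} (L μ : ℝ) (f : EuclideanSpace ℝ (Fin d) → ℝ)
    (df : EuclideanSpace ℝ (Fin d) → EuclideanSpace ℝ (Fin d)) : Prop :=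
  ∀ x y : EuclideanSpace ℝ (Fin d),
    μ / 2 * ‖x - y‖ ^ 2 ≤ f x - f y - ⟪df y, x - y⟫_ℝ ∧
    f x - f y - ⟪df y, x - y⟫_ℝ ≤ L / 2 * ‖x - y‖ ^ 2

/-- The Bregman divergence `D_f(x, y) = f x - f y - ⟪∇f y, x - y⟫` of `f`,
with gradient map `df`. -/
noncomputable def Breg {d : ℕ} (f : EuclideanSpace ℝ (Fin d) → ℝ)
    (df : EuclideanSpace ℝ (Fin d) → EuclideanSpace ℝ (Fin d))
    (x y : EuclideanSpace ℝ (Fin d)) : ℝ :=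
  f x - f y - ⟪df y, x - y⟫_ℝ

local notation "ℝ^" n:max => EuclideanSpace ℝ (Fin n)

section Average

variable {ι E : Type*} [Fintype ι]

lemma norm_avg_sq_le [SeminormedAddCommGroup E] [NormedSpace ℝ E] (v : ι → E) :
    ‖(Fintype.card ι : ℝ)⁻¹ • ∑ i, v i‖ ^ 2 ≤ (Fintype.card ι : ℝ)⁻¹ * ∑ i, ‖v i‖ ^ 2 := by
  set n : ℝ := (Fintype.card ι : ℝ)
  have hsum : ‖∑ i, v i‖ ^ 2 ≤ n * ∑ i, ‖v i‖ ^ 2 :=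
    (pow_le_pow_left₀ (norm_nonneg _) (norm_sum_le _ _) 2).trans sq_sum_le_card_mul_sum_sq
  rw [norm_smul, mul_pow, Real.norm_of_nonneg (by positivity)]
  rcases eq_or_ne n 0 with hn | hn
  · simp [hn]
  · calc n⁻¹ ^ 2 * ‖∑ i, v i‖ ^ 2 ≤ n⁻¹ ^ 2 * (n * ∑ i, ‖v i‖ ^ 2) := by gcongr
      _ = n⁻¹ * ∑ i, ‖v i‖ ^ 2 := by field_simp

lemma norm_avg_sq_le_add [SeminormedAddCommGroup E] [NormedSpace ℝ E] (v w : ι → E) :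
    ‖(Fintype.card ι : ℝ)⁻¹ • ∑ i, v i‖ ^ 2 ≤
      2 * ((Fintype.card ι : ℝ)⁻¹ * ∑ i, ‖v i - w i‖ ^ 2) +
        2 * ((Fintype.card ι : ℝ)⁻¹ ^ 2 * ‖∑ i, w i‖ ^ 2) := by
  set n : ℝ := (Fintype.card ι : ℝ)
  set A := n⁻¹ • ∑ i, (v i - w i)
  set B := n⁻¹ • ∑ i, w i
  have hsplit : n⁻¹ • ∑ i, v i = A + B := by
    rw [← smul_add, ← sum_add_distrib]; simp
  have hB : ‖B‖ ^ 2 = n⁻¹ ^ 2 * ‖∑ i, w i‖ ^ 2 := by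
    rw [norm_smul, mul_pow, Real.norm_of_nonneg (by positivity)]
  calc ‖n⁻¹ • ∑ i, v i‖ ^ 2 ≤ (‖A‖ + ‖B‖) ^ 2 := by
        rw [hsplit]; gcongr; exact norm_add_le A B
    _ ≤ 2 * (‖A‖ ^ 2 + ‖B‖ ^ 2) := add_sq_le
    _ ≤ _ := by rw [hB]; linarith [norm_avg_sq_le fun i => v i - w i]

variable [Nonempty ι] [AddCommGroup E] [Module ℝ E]

lemma avg_sub_eq (x : ι → E) (c : E) :
    (Fintype.card ι : ℝ)⁻¹ • ∑ i, (x i - c) = (Fintype.card ι : ℝ)⁻¹ • ∑ i, x i - c := by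
  rw [sum_sub_distrib, smul_sub, sum_const, card_univ, ← Nat.cast_smul_eq_nsmul ℝ, smul_smul,
    inv_mul_cancel₀ (by positivity), one_smul]

lemma sum_sub_avg_eq_zero (x : ι → E) :
    ∑ i, (x i - (Fintype.card ι : ℝ)⁻¹ • ∑ j, x j) = 0 := by
  have h := avg_sub_eq x ((Fintype.card ι : ℝ)⁻¹ • ∑ j, x j)
  rw [sub_self] at h
  exact (smul_eq_zero.1 h).resolve_left (by positivity)

end Average

namespace SmoothSC

variable {d : ℕ} {L μ : ℝ} {f : ℝ^d → ℝ} {df : ℝ^d → ℝ^d}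

lemma sub_inner (hf : SmoothSC L μ f df) (c : ℝ^d) :
    SmoothSC L μ (fun w => f w - ⟪c, w⟫_ℝ) (fun w => df w - c) := by
  intro x y
  have hbreg : f x - ⟪c, x⟫_ℝ - (f y - ⟪c, y⟫_ℝ) - ⟪df y - c, x - y⟫_ℝ
      = f x - f y - ⟪df y, x - y⟫_ℝ := by
    rw [inner_sub_left, inner_sub_right, inner_sub_right]; ring
  rw [hbreg]
  exact hf x y

lemma apply_sub_inv_smul_grad_le (hf : SmoothSC L μ f df) (hL : 0 < L) (x : ℝ^d) :
    f (x - L⁻¹ • df x) ≤ f x - (2 * L)⁻¹ * ‖df x‖ ^ 2 := by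
  have h := (hf (x - L⁻¹ • df x) x).2
  rw [sub_sub_cancel_left, inner_neg_right, real_inner_smul_right, real_inner_self_eq_norm_sq,
    norm_neg, norm_smul, Real.norm_of_nonneg (by positivity)] at h
  have hcoef : L / 2 * (L⁻¹ * ‖df x‖) ^ 2 = L⁻¹ * ‖df x‖ ^ 2 - (2 * L)⁻¹ * ‖df x‖ ^ 2 := by
    field_simp; ring
  linarith

lemma grad_eq_zero_of_forall_le (hf : SmoothSC L μ f df) (hL : 0 < L) {x : ℝ^d}
    (hmin : ∀ y, f x ≤ f y) : df x = 0 := by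
  have h := (hmin _).trans (hf.apply_sub_inv_smul_grad_le hL x)
  have hsq : ‖df x‖ ^ 2 ≤ 0 :=
    nonpos_of_mul_nonpos_left (by linarith) (by positivity : (0 : ℝ) < (2 * L)⁻¹)
  simpa using hsq.antisymm (sq_nonneg _)

/-- Co-coercivity of the gradient. Subtracting the linear part `⟪df y, ·⟫` gives a function that is
still smooth, and convex with minimiser `y`; one gradient step from `x` then bounds
`‖df x - df y‖²` by its gap. -/
theorem norm_grad_sub_sq_le (hf : SmoothSC L μ f df) (hL : 0 < L) (hμ : 0 ≤ μ) (x y : ℝ^d) :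
    ‖df x - df y‖ ^ 2 ≤ 2 * L * Breg f df x y := by
  have hφ := hf.sub_inner (df y)
  have hstep := hφ.apply_sub_inv_smul_grad_le hL x
  have hmin := (hφ (x - L⁻¹ • (df x - df y)) y).1
  simp only [sub_self, inner_zero_left, sub_zero] at hstep hmin
  have hbreg : Breg f df x y = f x - ⟪df y, x⟫_ℝ - (f y - ⟪df y, y⟫_ℝ) := by
    rw [Breg, inner_sub_right]; ring
  have hgap : (2 * L)⁻¹ * ‖df x - df y‖ ^ 2 ≤ Breg f df x y := by
    have : 0 ≤ μ / 2 * ‖x - L⁻¹ • (df x - df y) - y‖ ^ 2 := by positivity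
    linarith
  calc ‖df x - df y‖ ^ 2 = 2 * L * ((2 * L)⁻¹ * ‖df x - df y‖ ^ 2) := by field_simp
    _ ≤ 2 * L * Breg f df x y := by gcongr

variable {ι : Type*} [Fintype ι] [Nonempty ι]

lemma avg_apply_le (hf : SmoothSC L μ f df) (x : ι → ℝ^d) {xhat : ℝ^d}
    (hxhat : xhat = (Fintype.card ι : ℝ)⁻¹ • ∑ i, x i) :
    (Fintype.card ι : ℝ)⁻¹ * ∑ i, f (x i) ≤
      f xhat + L / 2 * ((Fintype.card ι : ℝ)⁻¹ * ∑ i, ‖x i - xhat‖ ^ 2) := by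
  have hn : (0 : ℝ) < Fintype.card ι := by positivity
  have hcenter : ∑ i, ⟪df xhat, x i - xhat⟫_ℝ = 0 := by
    rw [← inner_sum, hxhat, sum_sub_avg_eq_zero, inner_zero_right]
  have hsum := sum_le_sum fun i (_ : i ∈ univ) => (hf (x i) xhat).2
  simp only [sum_sub_distrib, hcenter, sub_zero, sum_const, card_univ, nsmul_eq_mul,
    ← mul_sum] at hsum
  rw [← mul_le_mul_iff_of_pos_left hn]
  field_simp
  linarith

theorem le_inner_avg_grad (hf : SmoothSC L μ f df) (hμ : 0 ≤ μ) (x : ι → ℝ^d) (y : ℝ^d)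
    {xhat : ℝ^d} (hxhat : xhat = (Fintype.card ι : ℝ)⁻¹ • ∑ i, x i) :
    f xhat - f y + μ / 2 * ‖xhat - y‖ ^ 2
        - L / 2 * ((Fintype.card ι : ℝ)⁻¹ * ∑ i, ‖x i - xhat‖ ^ 2) ≤
      (Fintype.card ι : ℝ)⁻¹ * ∑ i, ⟪xhat - y, df (x i)⟫_ℝ := by
  have hn : (0 : ℝ) < Fintype.card ι := by positivity
  have hpt : ∀ i, f xhat - f y + μ / 2 * ‖x i - y‖ ^ 2 - L / 2 * ‖x i - xhat‖ ^ 2 ≤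
      ⟪xhat - y, df (x i)⟫_ℝ := by
    intro i
    have hlow := (hf y (x i)).1
    have hup := (hf xhat (x i)).2
    rw [norm_sub_rev] at hlow hup
    have hsplit : ⟪xhat - y, df (x i)⟫_ℝ = ⟪df (x i), xhat - x i⟫_ℝ - ⟪df (x i), y - x i⟫_ℝ := by
      rw [← inner_sub_right, sub_sub_sub_cancel_right, real_inner_comm]
    linarith
  have hsum := sum_le_sum fun i (_ : i ∈ univ) => hpt i
  simp only [sum_sub_distrib, sum_add_distrib, sum_const, card_univ, nsmul_eq_mul,
    ← mul_sum] at hsum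
  have hjensen := norm_avg_sq_le fun i => x i - y
  rw [avg_sub_eq, ← hxhat, le_inv_mul_iff₀ hn] at hjensen
  rw [← mul_le_mul_iff_of_pos_left hn]
  field_simp
  nlinarith [mul_le_mul_of_nonneg_left hjensen hμ]

end SmoothSC

section Expectation

variable {d : ℕ} {Z : Type*} [MeasurableSpace Z] {ν : Measure Z}
  {F : ℝ^d → Z → ℝ} {dF : ℝ^d → Z → ℝ^d} {f : ℝ^d → ℝ} {df : ℝ^d → ℝ^d} {L μ : ℝ}

structure SmoothSCOracle (L μ : ℝ) (ν : Measure Z) (F : ℝ^d → Z → ℝ) (dF : ℝ^d → Z → ℝ^d)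
    (f : ℝ^d → ℝ) (df : ℝ^d → ℝ^d) : Prop where
  smoothSC_ae : ∀ᵐ z ∂ν, SmoothSC L μ (F · z) (dF · z)
  integrable : ∀ x, Integrable (F x) ν
  integrable_grad : ∀ x, Integrable (dF x) ν
  eq_integral : ∀ x, f x = ∫ z, F x z ∂ν
  grad_eq_integral : ∀ x, df x = ∫ z, dF x z ∂ν

namespace SmoothSCOracle

lemma integrable_breg (hO : SmoothSCOracle L μ ν F dF f df) (x y : ℝ^d) :
    Integrable (fun z => Breg (F · z) (dF · z) x y) ν :=
  ((hO.integrable x).sub (hO.integrable y)).sub ((hO.integrable_grad y).inner_const (x - y))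

lemma integral_breg (hO : SmoothSCOracle L μ ν F dF f df) (x y : ℝ^d) :
    ∫ z, Breg (F · z) (dF · z) x y ∂ν = Breg f df x y := by
  have hFxy : Integrable (fun z => F x z - F y z) ν := (hO.integrable x).sub (hO.integrable y)
  simp only [Breg]
  rw [integral_sub hFxy ((hO.integrable_grad y).inner_const (x - y)),
    integral_sub (hO.integrable x) (hO.integrable y), hO.eq_integral, hO.eq_integral,
    hO.grad_eq_integral, real_inner_comm, ← integral_inner (hO.integrable_grad y)]
  simp_rw [real_inner_comm]

lemma smoothSC [IsProbabilityMeasure ν] (hO : SmoothSCOracle L μ ν F dF f df) :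
    SmoothSC L μ f df := by
  intro x y
  change _ ≤ Breg f df x y ∧ Breg f df x y ≤ _
  rw [← hO.integral_breg]
  constructor
  · simpa using integral_mono_ae (integrable_const _) (hO.integrable_breg x y)
      (hO.smoothSC_ae.mono fun z hz => (hz x y).1)
  · simpa using integral_mono_ae (hO.integrable_breg x y) (integrable_const _)
      (hO.smoothSC_ae.mono fun z hz => (hz x y).2)

lemma integral_norm_grad_sub_sq_le (hO : SmoothSCOracle L μ ν F dF f df) (hL : 0 < L)
    (hμ : 0 ≤ μ) (x y : ℝ^d) :
    ∫ z, ‖dF x z - dF y z‖ ^ 2 ∂ν ≤ 2 * L * Breg f df x y := by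
  rw [← hO.integral_breg, ← integral_const_mul]
  exact integral_mono_of_nonneg (ae_of_all _ fun _ => sq_nonneg _)
    ((hO.integrable_breg x y).const_mul _)
    (hO.smoothSC_ae.mono fun z hz => hz.norm_grad_sub_sq_le hL hμ x y)

end SmoothSCOracle

end Expectation

section RandomVectors

variable {Ω E : Type*} [MeasurableSpace Ω] {P : Measure Ω}
  [NormedAddCommGroup E] [InnerProductSpace ℝ E]

lemma MeasureTheory.MemLp.integrable_inner {G H : Ω → E} (hG : MemLp G 2 P) (hH : MemLp H 2 P) :
    Integrable (fun ω => ⟪G ω, H ω⟫_ℝ) P :=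
  memLp_one_iff_integrable.1 <| hG.of_bilin (fun a b => ⟪a, b⟫_ℝ) 1 hH (hG.1.inner hH.1)
    (ae_of_all _ fun ω => by simpa using nnnorm_inner_le_nnnorm (𝕜 := ℝ) (G ω) (H ω))

variable [IsProbabilityMeasure P] [CompleteSpace E]

lemma integral_norm_sub_smul_sq {G : Ω → E} (hG : MemLp G 2 P) (c : E) (γ : ℝ) :
    ∫ ω, ‖c - γ • G ω‖ ^ 2 ∂P =
      ‖c‖ ^ 2 - 2 * γ * ⟪c, ∫ ω, G ω ∂P⟫_ℝ + γ ^ 2 * ∫ ω, ‖G ω‖ ^ 2 ∂P := by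
  have hG1 : Integrable G P := hG.integrable one_le_two
  have hG2 : Integrable (fun ω => ‖G ω‖ ^ 2) P := hG.integrable_norm_pow two_ne_zero
  have hcross : Integrable (fun ω => 2 * (γ * ⟪c, G ω⟫_ℝ)) P :=
    ((hG1.const_inner c).const_mul γ).const_mul 2
  have hfirst : Integrable (fun ω => ‖c‖ ^ 2 - 2 * (γ * ⟪c, G ω⟫_ℝ)) P :=
    (integrable_const _).sub hcross
  simp_rw [norm_sub_sq_real, real_inner_smul_right, norm_smul, mul_pow, Real.norm_eq_abs, sq_abs]
  rw [integral_add hfirst (hG2.const_mul _),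
    integral_sub (integrable_const _) hcross, integral_const, integral_const_mul,
    integral_const_mul, integral_const_mul, integral_inner hG1]
  simp [mul_assoc]

variable [MeasurableSpace E] [BorelSpace E] {ι : Type*} [Fintype ι]

theorem integral_norm_sum_sq_of_iIndepFun {Y : ι → Ω → E} (hY : ∀ i, MemLp (Y i) 2 P)
    (hindep : iIndepFun Y P) (hmean : ∀ i, ∫ ω, Y i ω ∂P = 0) :
    ∫ ω, ‖∑ i, Y i ω‖ ^ 2 ∂P = ∑ i, ∫ ω, ‖Y i ω‖ ^ 2 ∂P := by
  have hint : ∀ i j, Integrable (fun ω => ⟪Y i ω, Y j ω⟫_ℝ) P :=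
    fun i j => (hY i).integrable_inner (hY j)
  have hcross : ∀ i j, j ≠ i → ∫ ω, ⟪Y i ω, Y j ω⟫_ℝ ∂P = 0 := fun i j hji =>
    ((hindep.indepFun hji.symm).integral_bilin ((hY i).integrable one_le_two)
      ((hY j).integrable one_le_two) (innerSL ℝ)).trans (by simp [hmean])
  simp_rw [← real_inner_self_eq_norm_sq, sum_inner, inner_sum]
  rw [integral_finsetSum _ fun i _ => integrable_finsetSum _ fun j _ => hint i j]
  refine sum_congr rfl fun i _ => ?_
  rw [integral_finsetSum _ fun j _ => hint i j,
    sum_eq_single i (fun j _ hji => hcross i j hji) (by simp)]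

theorem integral_norm_avg_sq_le_of_iIndepFun {Y Y₀ : ι → Ω → E} (hY : ∀ i, MemLp (Y i) 2 P)
    (hY₀ : ∀ i, MemLp (Y₀ i) 2 P) (hindep : iIndepFun Y₀ P) (hmean : ∀ i, ∫ ω, Y₀ i ω ∂P = 0) :
    ∫ ω, ‖(Fintype.card ι : ℝ)⁻¹ • ∑ i, Y i ω‖ ^ 2 ∂P ≤
      2 * ((Fintype.card ι : ℝ)⁻¹ * ∑ i, ∫ ω, ‖Y i ω - Y₀ i ω‖ ^ 2 ∂P) +
        2 * ((Fintype.card ι : ℝ)⁻¹ ^ 2 * ∑ i, ∫ ω, ‖Y₀ i ω‖ ^ 2 ∂P) := by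
  set n : ℝ := (Fintype.card ι : ℝ)
  have hpt : ∀ ω, ‖n⁻¹ • ∑ i, Y i ω‖ ^ 2 ≤
      2 * (n⁻¹ * ∑ i, ‖Y i ω - Y₀ i ω‖ ^ 2) + 2 * (n⁻¹ ^ 2 * ‖∑ i, Y₀ i ω‖ ^ 2) :=
    fun ω => norm_avg_sq_le_add (Y · ω) (Y₀ · ω)
  have hdiff : ∀ i, Integrable (fun ω => ‖Y i ω - Y₀ i ω‖ ^ 2) P :=
    fun i => ((hY i).sub (hY₀ i)).integrable_norm_pow two_ne_zero
  have hsum₀ : Integrable (fun ω => ‖∑ i, Y₀ i ω‖ ^ 2) P :=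
    (memLp_finsetSum _ fun i _ => hY₀ i).integrable_norm_pow two_ne_zero
  have hlhs : Integrable (fun ω => ‖n⁻¹ • ∑ i, Y i ω‖ ^ 2) P :=
    ((memLp_finsetSum _ fun i _ => hY i).const_smul n⁻¹).integrable_norm_pow two_ne_zero
  have hdiffs : Integrable (fun ω => 2 * (n⁻¹ * ∑ i, ‖Y i ω - Y₀ i ω‖ ^ 2)) P :=
    ((integrable_finsetSum _ fun i _ => hdiff i).const_mul _).const_mul _
  have hrhs : Integrable (fun ω => 2 * (n⁻¹ * ∑ i, ‖Y i ω - Y₀ i ω‖ ^ 2) +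
      2 * (n⁻¹ ^ 2 * ‖∑ i, Y₀ i ω‖ ^ 2)) P :=
    hdiffs.add ((hsum₀.const_mul _).const_mul _)
  refine (integral_mono hlhs hrhs hpt).trans_eq ?_
  rw [integral_add hdiffs ((hsum₀.const_mul _).const_mul _), integral_const_mul, integral_const_mul,
    integral_const_mul, integral_const_mul, integral_finsetSum _ fun i _ => hdiff i,
    integral_norm_sum_sq_of_iIndepFun hY₀ hindep hmean]

end RandomVectors

section Minibatch

variable {d : ℕ} {Ω Z ι : Type*} [MeasurableSpace Ω] [MeasurableSpace Z] [Fintype ι]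
  {P : Measure Ω} {ν : ι → Measure Z} {z : ι → Ω → Z}
  {F : ℝ^d → Z → ℝ} {dF : ℝ^d → Z → ℝ^d} {f : ℝ^d → ℝ} {df : ℝ^d → ℝ^d} {L μ : ℝ}

lemma integral_avg_grad (hz : ∀ i, MeasurePreserving (z i) P (ν i))
    (hdF : ∀ i y, Integrable (dF y) (ν i)) (hdf : ∀ i y, df y = ∫ w, dF y w ∂ν i)
    (x : ι → ℝ^d) :
    ∫ ω, (Fintype.card ι : ℝ)⁻¹ • ∑ i, dF (x i) (z i ω) ∂P =
      (Fintype.card ι : ℝ)⁻¹ • ∑ i, df (x i) := by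
  have hint : ∀ i, Integrable (fun ω => dF (x i) (z i ω)) P :=
    fun i => (hz i).integrable_comp_of_integrable (hdF i (x i))
  rw [integral_smul, integral_finsetSum _ fun i _ => hint i]
  congr 1
  refine sum_congr rfl fun i _ => ?_
  rw [hdf i]
  exact (hz i).hasLaw.integral_comp (hdF i (x i)).aestronglyMeasurable

theorem integral_norm_avg_grad_sq_le [IsProbabilityMeasure P] [Nonempty ι] (hL : 0 < L)
    (hμ : 0 ≤ μ) (hz : ∀ i, MeasurePreserving (z i) P (ν i)) (hindep : iIndepFun z P)
    (hO : ∀ i, SmoothSCOracle L μ (ν i) F dF f df) (hdF : ∀ i y, MemLp (dF y) 2 (ν i))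
    (x : ι → ℝ^d) {xstar : ℝ^d} (hmeas : Measurable (dF xstar)) (hstar : df xstar = 0) :
    ∫ ω, ‖(Fintype.card ι : ℝ)⁻¹ • ∑ i, dF (x i) (z i ω)‖ ^ 2 ∂P ≤
      4 * L * ((Fintype.card ι : ℝ)⁻¹ * ∑ i, f (x i) - f xstar) +
        2 * ((Fintype.card ι : ℝ)⁻¹ *
          ((Fintype.card ι : ℝ)⁻¹ * ∑ i, ∫ w, ‖dF xstar w‖ ^ 2 ∂ν i)) := by
  have hY : ∀ i y, MemLp (fun ω => dF y (z i ω)) 2 P :=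
    fun i y => (hdF i y).comp_measurePreserving (hz i)
  have hdev : ∀ i, ∫ ω, ‖dF (x i) (z i ω) - dF xstar (z i ω)‖ ^ 2 ∂P ≤
      2 * L * (f (x i) - f xstar) := fun i => by
    refine ((hz i).hasLaw.integral_comp
      (((hdF i _).sub (hdF i _)).1.norm.pow 2)).trans_le ?_
    simpa [Breg, hstar] using (hO i).integral_norm_grad_sub_sq_le hL hμ (x i) xstar
  have hvar : ∀ i, ∫ ω, ‖dF xstar (z i ω)‖ ^ 2 ∂P = ∫ w, ‖dF xstar w‖ ^ 2 ∂ν i :=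
    fun i => (hz i).hasLaw.integral_comp ((hdF i xstar).1.norm.pow 2)
  have hcentred : ∀ i, ∫ ω, dF xstar (z i ω) ∂P = 0 := fun i => by
    rw [← hstar, (hO i).grad_eq_integral]
    exact (hz i).hasLaw.integral_comp (hdF i xstar).1
  refine (integral_norm_avg_sq_le_of_iIndepFun (fun i => hY i (x i)) (fun i => hY i xstar)
    (hindep.comp (fun _ => dF xstar) fun _ => hmeas) hcentred).trans ?_
  have hdevsum : (Fintype.card ι : ℝ)⁻¹ * ∑ i, ∫ ω, ‖dF (x i) (z i ω) - dF xstar (z i ω)‖ ^ 2 ∂P ≤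
      2 * L * ((Fintype.card ι : ℝ)⁻¹ * ∑ i, f (x i) - f xstar) :=
    calc _ ≤ (Fintype.card ι : ℝ)⁻¹ * ∑ i, 2 * L * (f (x i) - f xstar) := by
          gcongr with i; exact hdev i
      _ = _ := by
        rw [← mul_sum, sum_sub_distrib, sum_const, card_univ, nsmul_eq_mul]
        field_simp
  simp only [hvar]
  linarith

end Minibatch

lemma descent_step_le {a I Q G V S γ L μ : ℝ} (hγ : 0 ≤ γ) (hL : 0 ≤ L) (hγL : 4 * γ * L ≤ 1)
    (hG : 0 ≤ G) (hV : 0 ≤ V) (hI : G + μ / 2 * a - L / 2 * V ≤ I)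
    (hQ : Q ≤ 4 * L * (G + L / 2 * V) + 2 * S) :
    a - 2 * γ * I + γ ^ 2 * Q ≤ (1 - γ * μ) * a + 2 * γ * L * V + 2 * γ ^ 2 * S - γ / 2 * G := by
  have hγLV : 0 ≤ γ * L * V := by positivity
  nlinarith [mul_le_mul_of_nonneg_left hQ (sq_nonneg γ), mul_le_mul_of_nonneg_left hI hγ,
    mul_nonneg (sub_nonneg.2 hγL) (mul_nonneg hγ hG), mul_nonneg hγ hG,
    mul_nonneg (sub_nonneg.2 hγL) hγLV]

theorem optimality_gap_contraction_general {d M : ℕ} (hM : 0 < M) (L : ℝ) (hL : 0 < L) (μ : ℝ) (hμ : 0 ≤ μ)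
    {Z : Type*} [MeasurableSpace Z] {Ω : Type*} [MeasurableSpace Ω]
    (P : Measure Ω) [IsProbabilityMeasure P]
    (D : Fin M → Measure Z) (hD : ∀ m, IsProbabilityMeasure (D m))
    (F : EuclideanSpace ℝ (Fin d) → Z → ℝ) (dF : EuclideanSpace ℝ (Fin d) → Z → EuclideanSpace ℝ (Fin d))
    (f : EuclideanSpace ℝ (Fin d) → ℝ) (df : EuclideanSpace ℝ (Fin d) → EuclideanSpace ℝ (Fin d))
    (hsmooth : ∀ m, ∀ᵐ z ∂(D m), SmoothSC L μ (fun x => F x z) (fun x => dF x z))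
    (hf : ∀ m x, f x = ∫ z, F x z ∂(D m))
    (hdf : ∀ m x, df x = ∫ z, dF x z ∂(D m))
    (hdFjm : Measurable (fun p : EuclideanSpace ℝ (Fin d) × Z => dF p.1 p.2))
    (hFint : ∀ m x, Integrable (fun z => F x z) (D m))
    (hdFsq : ∀ m x, Integrable (fun z => ‖dF x z‖ ^ 2) (D m))
    (xstar : EuclideanSpace ℝ (Fin d)) (hmin : ∀ y, f xstar ≤ f y)
    (z : Fin M → Ω → Z) (hz : ∀ m, Measurable (z m))
    (hindep : iIndepFun (m := fun _ : Fin M => ‹MeasurableSpace Z›) z P)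
    (hlaw : ∀ m, P.map (z m) = D m)
    (sopt2 : ℝ)
    (hsopt2 : sopt2 = (M : ℝ)⁻¹ * ∑ m, ∫ w, ‖dF xstar w‖ ^ 2 ∂(D m))
    (x : Fin M → EuclideanSpace ℝ (Fin d))
    (xhat : EuclideanSpace ℝ (Fin d)) (hxhat : xhat = (M : ℝ)⁻¹ • ∑ m, x m)
    (Vdev : ℝ) (hV : Vdev = (M : ℝ)⁻¹ * ∑ m, ‖x m - xhat‖ ^ 2)
    (γ : ℝ) (hγ0 : 0 < γ) (hγ : γ ≤ 1 / (4 * L * (1 + 2 / M))) :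
    (∫ ω, ‖xhat - γ • ((M : ℝ)⁻¹ • ∑ m, dF (x m) (z m ω)) - xstar‖ ^ 2 ∂P) ≤
      (1 - γ * μ) * ‖xhat - xstar‖ ^ 2 + 2 * γ * L * Vdev +
        2 * γ ^ 2 * sopt2 / M - γ / 2 * (f xhat - f xstar) := by
  have : Nonempty (Fin M) := ⟨⟨0, hM⟩⟩
  have hdFm : ∀ y, Measurable (dF y) := fun y => hdFjm.comp measurable_prodMk_left
  have hdF : ∀ m y, MemLp (dF y) 2 (D m) := fun m y =>
    (memLp_two_iff_integrable_sq_norm (hdFm y).aestronglyMeasurable).2 (hdFsq m y)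
  have hO : ∀ m, SmoothSCOracle L μ (D m) F dF f df := fun m =>
    ⟨hsmooth m, hFint m, fun y => (hdF m y).integrable one_le_two, hf m, hdf m⟩
  have hzD : ∀ m, MeasurePreserving (z m) P (D m) := fun m => ⟨hz m, hlaw m⟩
  have hfS : SmoothSC L μ f df := (hO ⟨0, hM⟩).smoothSC
  have hxhat' : xhat = (Fintype.card (Fin M) : ℝ)⁻¹ • ∑ m, x m := by rwa [Fintype.card_fin]
  have hI := hfS.le_inner_avg_grad hμ x xstar hxhat'
  have hA := hfS.avg_apply_le x hxhat'
  have hQ := integral_norm_avg_grad_sq_le hL hμ hzD hindep hO hdF x (hdFm xstar)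
    (hfS.grad_eq_zero_of_forall_le hL hmin)
  have hmean := integral_avg_grad hzD (fun m => (hO m).integrable_grad) hdf x
  have hg : MemLp (fun ω => (M : ℝ)⁻¹ • ∑ m, dF (x m) (z m ω)) 2 P :=
    (memLp_finsetSum univ fun m _ =>
      (hdF m (x m)).comp_measurePreserving (hzD m)).const_smul (M : ℝ)⁻¹
  have hγL : 4 * γ * L ≤ 1 := by
    have h := (le_div_iff₀ (by positivity)).1 hγ
    nlinarith [mul_nonneg (mul_nonneg hγ0.le hL.le) (by positivity : (0 : ℝ) ≤ 2 / M)]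
  simp only [Fintype.card_fin, ← hV, ← hsopt2] at hI hA hQ hmean
  simp_rw [sub_right_comm xhat]
  rw [integral_norm_sub_smul_sq hg, hmean, real_inner_smul_right, inner_sum]
  refine (descent_step_le (S := (M : ℝ)⁻¹ * sopt2) hγ0.le hL.le hγL (sub_nonneg.2 (hmin xhat))
    (by rw [hV]; positivity) hI (hQ.trans ?_)).trans_eq (by ring)
  gcongr
  linarith

/-- one-step optimality gap contraction. -/
theorem optimality_gap_contraction {d M : ℕ} (hM : 0 < M) (L : ℝ) (hL : 0 < L) (μ : ℝ) (hμ : 0 ≤ μ)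
    {Z : Type*} [MeasurableSpace Z] {Ω : Type*} [MeasurableSpace Ω]
    (P : Measure Ω) [IsProbabilityMeasure P]
    (D : Fin M → Measure Z) (hD : ∀ m, IsProbabilityMeasure (D m))
    (F : EuclideanSpace ℝ (Fin d) → Z → ℝ) (dF : EuclideanSpace ℝ (Fin d) → Z → EuclideanSpace ℝ (Fin d))
    (f : EuclideanSpace ℝ (Fin d) → ℝ) (df : EuclideanSpace ℝ (Fin d) → EuclideanSpace ℝ (Fin d))
    (hsmooth : ∀ m, ∀ᵐ z ∂(D m), SmoothSC L μ (fun x => F x z) (fun x => dF x z))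
    (hf : ∀ m x, f x = ∫ z, F x z ∂(D m))
    (hdf : ∀ m x, df x = ∫ z, dF x z ∂(D m))
    (hFjm : Measurable (fun p : EuclideanSpace ℝ (Fin d) × Z => F p.1 p.2))
    (hdFjm : Measurable (fun p : EuclideanSpace ℝ (Fin d) × Z => dF p.1 p.2))
    (hFint : ∀ m x, Integrable (fun z => F x z) (D m))
    (hdFsq : ∀ m x, Integrable (fun z => ‖dF x z‖ ^ 2) (D m))
    (xstar : EuclideanSpace ℝ (Fin d)) (hmin : ∀ y, f xstar ≤ f y)
    (z : Fin M → Ω → Z) (hz : ∀ m, Measurable (z m))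
    (hindep : iIndepFun (m := fun _ : Fin M => ‹MeasurableSpace Z›) z P)
    (hlaw : ∀ m, P.map (z m) = D m)
    (sopt2 : ℝ)
    (hsopt2 : sopt2 = (M : ℝ)⁻¹ * ∑ m, ∫ w, ‖dF xstar w‖ ^ 2 ∂(D m))
    (x : Fin M → EuclideanSpace ℝ (Fin d))
    (xhat : EuclideanSpace ℝ (Fin d)) (hxhat : xhat = (M : ℝ)⁻¹ • ∑ m, x m)
    (Vdev : ℝ) (hV : Vdev = (M : ℝ)⁻¹ * ∑ m, ‖x m - xhat‖ ^ 2)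
    (γ : ℝ) (hγ0 : 0 < γ) (hγ : γ ≤ 1 / (4 * L * (1 + 2 / M))) :
    (∫ ω, ‖xhat - γ • ((M : ℝ)⁻¹ • ∑ m, dF (x m) (z m ω)) - xstar‖ ^ 2 ∂P) ≤
      (1 - γ * μ) * ‖xhat - xstar‖ ^ 2 + 2 * γ * L * Vdev +
        2 * γ ^ 2 * sopt2 / M - γ / 2 * (f xhat - f xstar) :=
  optimality_gap_contraction_general hM L hL μ hμ P D hD F dF f df hsmooth hf hdf hdFjm hFint hdFsq
    xstar hmin z hz hindep hlaw sopt2 hsopt2 x xhat hxhat Vdev hV γ hγ0 hγ
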